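/- Let char K = 0 and A = K + ∑_{i≥2} K x^i ⊆ K[x]. In D(A) (differential operators on A, realized inside operators on K[x,x^{-1}]), the relations w_{-2i} = w_{-2}^i and w_{-3-2i} = w_{-3} w_{-2}^i hold for all i ≥ 1, where w_{-j} are as defined: w_{-2} = (h+2)(h−1)x^{-2} and w_{-j} = (h−1)(h+1)⋯(h+j−2)(h+j)x^{-j} for j ≥ 3. -/

import Mathlib

/-- The coordinate ring of the cusp: the subalgebra `A = K + ∑_{i ≥ 2} K xⁱ` of `K[x]`,
i.e. (equivalently) the polynomials whose coefficient of `x` vanishes. -/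
def cusp (K : Type*) [Field K] : Subalgebra K (Polynomial K) where
  carrier := {p | p.coeff 1 = 0}
  zero_mem' := by simp
  one_mem' := by simp [Polynomial.coeff_one]
  add_mem' := by
    intro a b ha hb
    simp only [Set.mem_setOf_eq, Polynomial.coeff_add] at *
    rw [ha, hb, add_zero]
  mul_mem' := by
    intro a b ha hb
    simp only [Set.mem_setOf_eq] at *
    rw [Polynomial.coeff_mul, Finset.Nat.sum_antidiagonal_eq_sum_range_succ_mk]
    simp [Finset.sum_range_succ, ha, hb]
  algebraMap_mem' := by
    intro k
    simp [Polynomial.algebraMap_eq, Polynomial.coeff_C]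

/-- `A = K + ∑_{i≥2} K xⁱ` viewed inside the Laurent polynomial ring `K[x,x⁻¹]`. -/
def cuspL (K : Type*) [Field K] : Set (LaurentPolynomial K) :=
  Polynomial.toLaurent '' (cusp K : Set (Polynomial K))

/-- The `K`-linear operator on `K[x,x⁻¹]` sending `xⁿ ↦ f(n)·x^{n+d}`. -/
noncomputable def shiftScale (K : Type*) [Field K] (f : ℤ → K) (d : ℤ) :
    Module.End K (LaurentPolynomial K) :=
  (Finsupp.lsum K fun n : ℤ =>
    LinearMap.toSpanSingleton K (LaurentPolynomial K) (f n • LaurentPolynomial.T (n + d)))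
      ∘ₗ (AddMonoidAlgebra.coeffLinearEquiv K).toLinearMap

/-- The operator `h = x·∂` on `K[x,x⁻¹]`, acting by `xⁿ ↦ n·xⁿ`. -/
noncomputable def hOp (K : Type*) [Field K] : Module.End K (LaurentPolynomial K) :=
  shiftScale K (fun n => (n : K)) 0

/-- Multiplication by `x^d` as a `K`-linear operator on `K[x,x⁻¹]`. -/
noncomputable def xMul (K : Type*) [Field K] (d : ℤ) : Module.End K (LaurentPolynomial K) :=
  LinearMap.mulLeft K (LaurentPolynomial.T d)

open Polynomial in
/-- `P_i(X) = (X-1)·(X+1)(X+2)⋯(X+i-2)·(X+i)`, the polynomial with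
`w_{-i} = P_i(h)·x^{-i}`.  (For `i = 2` this is `(X-1)(X+2)`, i.e. `w_{-2} = (h+2)(h-1)x⁻²`.) -/
noncomputable def Pneg (K : Type*) [Field K] (i : ℕ) : Polynomial K :=
  (X - 1) * (∏ k ∈ Finset.Icc 1 (i - 2), (X + (k : Polynomial K))) * (X + (i : Polynomial K))

open Polynomial in
/-- `Q_i(X) = (X-i-1)·(X-i+1)⋯(X-2)·X`, the polynomial with `xⁱ·w_{-i} = Q_i(h)`. -/
noncomputable def Qneg (K : Type*) [Field K] (i : ℕ) : Polynomial K :=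
  (X - ((i : Polynomial K) + 1)) * (∏ k ∈ Finset.Icc 2 (i - 1), (X - (k : Polynomial K))) * X

/-- The element `w_{-i} = (h-1)(h+1)⋯(h+i-2)(h+i)·x^{-i}` of `D(K[x,x⁻¹])`, as an operator. -/
noncomputable def wneg (K : Type*) [Field K] (i : ℕ) : Module.End K (LaurentPolynomial K) :=
  Polynomial.aeval (hOp K) (Pneg K i) * xMul K (-(i : ℤ))

/-- `w₁ = (h-1)·x`. -/
noncomputable def wone (K : Type*) [Field K] : Module.End K (LaurentPolynomial K) :=
  (hOp K - 1) * xMul K 1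

/-- `w₋₁ = (h+1)(h-1)·x⁻¹`. -/
noncomputable def wnegone (K : Type*) [Field K] : Module.End K (LaurentPolynomial K) :=
  (hOp K + 1) * (hOp K - 1) * xMul K (-1)


/-!
Every `P(h)·xᵃ` acts diagonally on the monomials, and `xᵃ·Q(h) = Q(h - a)·xᵃ`. Hence
`w_{-m}·w_{-2} = P_m(h)·P_2(h + m)·x^{-m-2}`, and `P_2(X + m) = (X + m - 1)(X + m + 2)` supplies
exactly the two factors by which `P_{m+2}` exceeds `P_m` once `m ≥ 2`. So `w_{-m}·w_{-2} = w_{-m-2}`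
for `m ≥ 2`, and both relations follow by induction starting from `w_{-2}` and `w_{-3}`.
-/

open Polynomial
open LaurentPolynomial (T)
open scoped LaurentPolynomial

theorem LaurentPolynomial.linearMap_ext {R M : Type*} [CommSemiring R] [AddCommMonoid M]
    [Module R M] {f g : R[T;T⁻¹] →ₗ[R] M} (h : ∀ n, f (T n) = g (T n)) : f = g :=
  AddMonoidAlgebra.lhom_ext' fun n => LinearMap.ext_ring (h n)

section Operators

variable {K : Type*} [Field K]

theorem shiftScale_T (f : ℤ → K) (d n : ℤ) : shiftScale K f d (T n) = f n • T (n + d) := by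
  have hcoeff : AddMonoidAlgebra.coeffLinearEquiv K (T n : K[T;T⁻¹]) = Finsupp.single n 1 := rfl
  rw [shiftScale, LinearMap.comp_apply, LinearEquiv.coe_coe, hcoeff, Finsupp.lsum_single,
    LinearMap.toSpanSingleton_apply, one_smul]

theorem hOp_T (n : ℤ) : hOp K (T n) = (n : K) • T n := by
  rw [hOp, shiftScale_T, add_zero]

theorem aeval_hOp_T (P : K[X]) (n : ℤ) : aeval (hOp K) P (T n) = P.eval (n : K) • T n :=
  Module.End.aeval_apply_of_mem_apply_eq_smul (hOp_T n)

theorem xMul_T (d n : ℤ) : xMul K d (T n) = T (n + d) := by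
  rw [xMul, LinearMap.mulLeft_apply, ← LaurentPolynomial.T_add, add_comm]

theorem xMul_add (a b : ℤ) : xMul K (a + b) = xMul K a * xMul K b := by
  rw [xMul, xMul, xMul, LaurentPolynomial.T_add, LinearMap.mulLeft_mul, Module.End.mul_eq_comp]

theorem xMul_mul_aeval_hOp (a : ℤ) (Q : K[X]) :
    xMul K a * aeval (hOp K) Q = aeval (hOp K) (Q.comp (X - C (a : K))) * xMul K a := by
  refine LaurentPolynomial.linearMap_ext fun n => ?_
  simp only [Module.End.mul_apply, aeval_hOp_T, map_smul, xMul_T, eval_comp, eval_sub, eval_X,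
    eval_C, Int.cast_add, add_sub_cancel_right]

theorem aeval_hOp_mul_xMul_mul (P Q : K[X]) (a b : ℤ) :
    aeval (hOp K) P * xMul K a * (aeval (hOp K) Q * xMul K b)
      = aeval (hOp K) (P * Q.comp (X - C (a : K))) * xMul K (a + b) := by
  rw [map_mul, xMul_add, mul_assoc, ← mul_assoc (xMul K a), xMul_mul_aeval_hOp]
  simp only [mul_assoc]

end Operators

theorem Pneg_add_two_mul_comp (K : Type*) [Field K] (m : ℕ) :
    Pneg K (m + 2) * (Pneg K 2).comp (X + C ((m + 2 : ℕ) : K)) = Pneg K (m + 4) := by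
  have hprod : ∏ k ∈ Finset.Icc 1 (m + 2), (X + (k : K[X]))
      = (∏ k ∈ Finset.Icc 1 m, (X + (k : K[X]))) * (X + ((m + 1 : ℕ) : K[X]))
        * (X + ((m + 2 : ℕ) : K[X])) := by
    rw [Finset.prod_Icc_succ_top (by omega), Finset.prod_Icc_succ_top (by omega)]
  simp only [Pneg, Nat.add_sub_cancel, show m + 4 - 2 = m + 2 by omega, hprod,
    show Finset.Icc 1 (2 - 2) = ∅ by decide, Finset.prod_empty, mul_one, mul_comp, sub_comp,
    add_comp, X_comp, one_comp, natCast_comp, map_natCast]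
  push_cast
  ring

theorem wneg_add_two_mul_wneg_two (K : Type*) [Field K] (m : ℕ) :
    wneg K (m + 2) * wneg K 2 = wneg K (m + 4) := by
  rw [wneg, wneg, wneg, aeval_hOp_mul_xMul_mul, ← Pneg_add_two_mul_comp]
  push_cast
  rw [map_neg, sub_neg_eq_add, ← neg_add, show ((m : ℤ) + 2 + 2) = m + 4 by ring]

theorem wneg_add_two_add_two_mul (K : Type*) [Field K] (m k : ℕ) :
    wneg K (m + 2 + 2 * k) = wneg K (m + 2) * wneg K 2 ^ k := by
  induction k with
  | zero => rw [mul_zero, add_zero, pow_zero, mul_one]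
  | succ k ih =>
    rw [pow_succ, ← mul_assoc, ← ih, show m + 2 + 2 * (k + 1) = (m + 2 * k) + 4 by ring,
      ← wneg_add_two_mul_wneg_two, show m + 2 * k + 2 = m + 2 + 2 * k by ring]

theorem stmt15_general (K : Type*) [Field K] (i : ℕ) (hi : 1 ≤ i) :
    wneg K (2 * i) = (wneg K 2) ^ i ∧
    wneg K (3 + 2 * i) = wneg K 3 * (wneg K 2) ^ i := by
  obtain ⟨j, rfl⟩ := Nat.exists_eq_add_of_le' hi
  constructor
  · rw [pow_succ', ← wneg_add_two_add_two_mul K 0 j]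
    congr 1
    ring
  · exact wneg_add_two_add_two_mul K 1 (j + 1)

/-- In `D(A)` (realized inside the operators on `K[x,x⁻¹]`): for all `i ≥ 1`,
`w_{-2i} = w_{-2}ⁱ` and `w_{-3-2i} = w_{-3}·w_{-2}ⁱ`. -/
theorem stmt15 (K : Type*) [Field K] [CharZero K] (i : ℕ) (hi : 1 ≤ i) :
    wneg K (2 * i) = (wneg K 2) ^ i ∧
    wneg K (3 + 2 * i) = wneg K 3 * (wneg K 2) ^ i :=
  stmt15_general K i hi
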